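/- arXiv:math/0001042 — 7 statements merged into one kernel-verified Lean document; each statement's English description precedes it below -/
import Mathlib

section
/- Let F, F₁, F₂ be fields with F ⊆ F₁ and F ⊆ F₂. Let A₁, B₁ be square matrices over F₁ and A₂, B₂ square matrices over F₂. Then the kernel of B₁ ⊗_F A₂ + A₁ ⊗_F B₂ (a matrix over F₁ ⊗_F F₂) has dimension at least (dim ker B₁)·(dim ker B₂). -/
open Matrix Kronecker TensorProduct

section Aux

variable {F F₁ F₂ : Type*} [Field F] [Field F₁] [Field F₂] [Algebra F F₁] [Algebra F F₂]

/-- Kronecker tensor product of matrices acts on "pure tensor" vectors componentwise. -/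
lemma kronTMul_mulVec_tmul {p n q m : ℕ} (M : Matrix (Fin p) (Fin n) F₁)
    (N : Matrix (Fin q) (Fin m) F₂) (x : Fin n → F₁) (y : Fin m → F₂) :
    (M ⊗ₖₜ[F] N) *ᵥ (fun ab : Fin n × Fin m => x ab.1 ⊗ₜ[F] y ab.2) =
      fun ab : Fin p × Fin q => (M *ᵥ x) ab.1 ⊗ₜ[F] (N *ᵥ y) ab.2 := by
  funext ab
  obtain ⟨a, b⟩ := ab
  simp only [mulVec, dotProduct, kroneckerTMul, kroneckerMap_apply,
    Algebra.TensorProduct.tmul_mul_tmul, Fintype.sum_prod_type]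
  simp_rw [← TensorProduct.tmul_sum, ← TensorProduct.sum_tmul]

/-- A linearly independent family in `Kⁿ` admits a matrix retraction. -/
lemma exists_retraction_matrix {K : Type*} [Field K] {n r : ℕ} (u : Fin r → (Fin n → K))
    (hu : LinearIndependent K u) :
    ∃ M : Matrix (Fin r) (Fin n) K, ∀ i, M *ᵥ u i = Pi.single i 1 := by
  classical
  set f : (Fin r → K) →ₗ[K] (Fin n → K) := (Matrix.of fun a i => u i a).mulVecLin with hf_def
  have hf : ∀ i, f (Pi.single i 1) = u i := by
    intro i
    funext a
    simp [hf_def, Matrix.mulVecLin_apply, mulVec, dotProduct, Pi.single_apply]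
  have hker : LinearMap.ker f = ⊥ := by
    rw [LinearMap.ker_eq_bot']
    intro c hc
    have hsum : ∑ i, c i • u i = 0 := by
      funext a
      have := congrFun hc a
      simpa [hf_def, Matrix.mulVecLin_apply, mulVec, dotProduct, mul_comm,
        Finset.sum_apply] using this
    have := Fintype.linearIndependent_iff.mp hu c hsum
    funext i
    exact this i
  obtain ⟨g, hg⟩ := f.exists_leftInverse_of_injective hker
  refine ⟨LinearMap.toMatrix' g, fun i => ?_⟩
  have h1 : (LinearMap.toMatrix' g) *ᵥ u i = Matrix.toLin' (LinearMap.toMatrix' g) (u i) := by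
    rw [Matrix.toLin'_apply]
  rw [h1, Matrix.toLin'_toMatrix', ← hf i, ← LinearMap.comp_apply, hg, LinearMap.id_apply]

end Aux

/-- Convexity of kernel dimension for `B₁ ⊗ A₂ + A₁ ⊗ B₂` over `F₁ ⊗[F] F₂`. -/
theorem ker_dim_kronecker_sum_ge {F F₁ F₂ : Type*} [Field F] [Field F₁] [Field F₂]
    [Algebra F F₁] [Algebra F F₂] {n m : ℕ}
    (A₁ B₁ : Matrix (Fin n) (Fin n) F₁) (A₂ B₂ : Matrix (Fin m) (Fin m) F₂) :
    Module.finrank F₁ (LinearMap.ker B₁.mulVecLin) *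
      Module.finrank F₂ (LinearMap.ker B₂.mulVecLin) ≤
    Module.finrank (F₁ ⊗[F] F₂)
      (LinearMap.ker (B₁ ⊗ₖₜ[F] A₂ + A₁ ⊗ₖₜ[F] B₂).mulVecLin) := by
  classical
  set R := F₁ ⊗[F] F₂ with hR
  have hRnontriv : Nontrivial R := by
    have h0 : Module.rank F (F₁ ⊗[F] F₂) ≠ 0 := by
      rw [rank_tensorProduct]
      refine mul_ne_zero ?_ ?_
      · simpa [Cardinal.lift_eq_zero] using (rank_pos (R := F) (M := F₁)).ne'
      · simpa [Cardinal.lift_eq_zero] using (rank_pos (R := F) (M := F₂)).ne'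
    rw [← not_subsingleton_iff_nontrivial]
    intro h
    exact h0 (rank_zero_iff.mpr h)
  set r₁ := Module.finrank F₁ (LinearMap.ker B₁.mulVecLin) with hr₁
  set r₂ := Module.finrank F₂ (LinearMap.ker B₂.mulVecLin) with hr₂
  -- bases of the two kernels, viewed as families of vectors
  let b₁ := Module.finBasis F₁ (LinearMap.ker B₁.mulVecLin)
  let b₂ := Module.finBasis F₂ (LinearMap.ker B₂.mulVecLin)
  let u : Fin r₁ → (Fin n → F₁) := fun i => (b₁ i : Fin n → F₁)
  let v : Fin r₂ → (Fin m → F₂) := fun j => (b₂ j : Fin m → F₂)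
  have hu : LinearIndependent F₁ u :=
    b₁.linearIndependent.map' (Submodule.subtype _) (Submodule.ker_subtype _)
  have hv : LinearIndependent F₂ v :=
    b₂.linearIndependent.map' (Submodule.subtype _) (Submodule.ker_subtype _)
  have huk : ∀ i, B₁ *ᵥ u i = 0 := fun i => (b₁ i).2
  have hvk : ∀ j, B₂ *ᵥ v j = 0 := fun j => (b₂ j).2
  -- the family of tensor vectors
  set K := B₁ ⊗ₖₜ[F] A₂ + A₁ ⊗ₖₜ[F] B₂ with hK
  let w : Fin r₁ × Fin r₂ → (Fin n × Fin m → R) :=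
    fun ij => fun ab => u ij.1 ab.1 ⊗ₜ[F] v ij.2 ab.2
  -- each w ij is in the kernel
  have hwker : ∀ ij, w ij ∈ LinearMap.ker K.mulVecLin := by
    intro ij
    rw [LinearMap.mem_ker, Matrix.mulVecLin_apply, hK, Matrix.add_mulVec,
      kronTMul_mulVec_tmul, kronTMul_mulVec_tmul, huk, hvk]
    funext ab
    simp
  -- retraction matrices
  obtain ⟨M₁, hM₁⟩ := exists_retraction_matrix u hu
  obtain ⟨M₂, hM₂⟩ := exists_retraction_matrix v hv
  -- composing with (M₁ ⊗ₖₜ M₂) sends w to the standard basis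
  have hLw : ∀ ij, (M₁ ⊗ₖₜ[F] M₂).mulVecLin (w ij) = Pi.single ij (1 : R) := by
    intro ij
    rw [Matrix.mulVecLin_apply, show w ij = fun ab : Fin n × Fin m =>
      u ij.1 ab.1 ⊗ₜ[F] v ij.2 ab.2 from rfl, kronTMul_mulVec_tmul, hM₁, hM₂]
    funext ab
    obtain ⟨a, b⟩ := ab
    rcases eq_or_ne a ij.1 with ha | ha
    · rcases eq_or_ne b ij.2 with hb | hb
      · subst ha; subst hb
        simp [Pi.single_apply, Prod.ext_iff, ← Algebra.TensorProduct.one_def]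
      · simp [Pi.single_apply, ha, hb, Prod.ext_iff]
    · simp [Pi.single_apply, ha, Prod.ext_iff]
  -- linear independence of w over R
  have hw : LinearIndependent R w := by
    apply LinearIndependent.of_comp (M₁ ⊗ₖₜ[F] M₂).mulVecLin
    have : (M₁ ⊗ₖₜ[F] M₂).mulVecLin ∘ w = ⇑(Pi.basisFun R (Fin r₁ × Fin r₂)) := by
      funext ij
      rw [Function.comp_apply, hLw ij]
      exact (Pi.basisFun_apply R _ ij).symm
    rw [this]
    exact (Pi.basisFun R (Fin r₁ × Fin r₂)).linearIndependent
  -- restrict to the kernel submodule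
  let w' : Fin r₁ × Fin r₂ → LinearMap.ker K.mulVecLin := fun ij => ⟨w ij, hwker ij⟩
  have hw' : LinearIndependent R w' := by
    apply LinearIndependent.of_comp (LinearMap.ker K.mulVecLin).subtype
    exact hw
  -- cardinality bound via rank
  have hcard := hw'.cardinal_lift_le_rank
  have hrankfin : Module.rank R (LinearMap.ker K.mulVecLin) < Cardinal.aleph0 := by
    refine lt_of_le_of_lt (Submodule.rank_le _) ?_
    rw [rank_fun']
    exact Cardinal.nat_lt_aleph0 _
  have := Cardinal.toNat_le_toNat hcard (by simpa using hrankfin)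
  simpa [Module.finrank, Cardinal.mk_fintype, mul_comm] using this
end

section
/- For n×n matrices A and B over a commutative field, if K = dim ker A and M = dim ker B, then the homogeneous polynomial det(λA + μB) in variables λ, μ is divisible by λ^M · μ^K. -/
/-!
Extend a basis of `ker A` to a basis of `kⁿ` and use it as the columns of an invertible matrix
`P`. In `(λA + μB)P` the columns indexed by the kernel vectors are `μ` times columns of `BP`,
so `μ ^ dim ker A` divides `det (λA + μB) * det P`, and `det P` is a unit. Symmetrically
`λ ^ dim ker B` divides the determinant, and the two powers are coprime because `λ` and `μ` are
non-associated primes of the factorial ring `k[λ, μ]`.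
-/

open Matrix MvPolynomial

theorem Module.Basis.sumExtend_inl {ι K V : Type*} [DivisionRing K] [AddCommGroup V] [Module K V]
    {v : ι → V} (hs : LinearIndependent K v) (i : ι) : Basis.sumExtend hs (.inl i) = v i := by
  simp only [sumExtend, Equiv.trans_def, coe_reindex, coe_extend, Function.comp_apply]
  rfl

theorem Module.Basis.exists_basis_card_eq_finrank_submodule {k V ι : Type*} [Field k]
    [AddCommGroup V] [Module k V] [Fintype ι] (b₀ : Basis ι k V) (W : Submodule k V) :
    ∃ (b : Basis ι k V) (s : Finset ι), s.card = Module.finrank k W ∧ ∀ j ∈ s, b j ∈ W := by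
  have : FiniteDimensional k V := b₀.finiteDimensional_of_finite
  let b := Basis.sumExtend ((Module.finBasis k W).linearIndependent.map' W.subtype W.ker_subtype)
  let e := b.indexEquiv b₀
  refine ⟨b.reindex e, Finset.univ.map (Function.Embedding.inl.trans e.toEmbedding), by simp, ?_⟩
  intro j hj
  obtain ⟨i, -, rfl⟩ := Finset.mem_map.mp hj
  simp only [Function.Embedding.trans_apply, Function.Embedding.inl_apply, Equiv.coe_toEmbedding,
    Basis.reindex_apply, Equiv.symm_apply_apply, b, Basis.sumExtend_inl]
  exact Submodule.coe_mem _

theorem Matrix.pow_card_dvd_det_of_dvd_col {R m : Type*} [CommRing R] [Fintype m] [DecidableEq m]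
    (N : Matrix m m R) (c : R) (s : Finset m) (h : ∀ j ∈ s, ∀ i, c ∣ N i j) :
    c ^ s.card ∣ N.det := by
  rw [det_apply']
  refine Finset.dvd_sum fun σ _ => Dvd.dvd.mul_left ?_ _
  rw [← Finset.prod_const, ← Finset.prod_mul_prod_compl s]
  exact (Finset.prod_dvd_prod_of_dvd _ _ fun j hj => h j hj _).mul_right _

theorem Matrix.pow_finrank_ker_dvd_det_smul_map_add_smul {k R m : Type*} [Field k] [CommRing R]
    [Fintype m] [DecidableEq m] (f : k →+* R) (A : Matrix m m k) (N : Matrix m m R) (s t : R) :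
    t ^ Module.finrank k (LinearMap.ker A.mulVecLin) ∣ (s • A.map f + t • N).det := by
  obtain ⟨b, S, hS, hb⟩ :=
    (Pi.basisFun k m).exists_basis_card_eq_finrank_submodule (LinearMap.ker A.mulVecLin)
  let P := (Pi.basisFun k m).toMatrix b
  have hAP : ∀ j ∈ S, ∀ i, (A * P) i j = 0 := fun j hj i => by
    have hAb : A *ᵥ b j = 0 := hb j hj
    simpa [P, mul_apply, mulVec, dotProduct, Module.Basis.toMatrix_apply] using congrFun hAb i
  have hP : IsUnit (P.map f).det := by
    have : Invertible P := (Pi.basisFun k m).invertibleToMatrix b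
    simpa [RingHom.map_det] using (isUnit_det_of_invertible P).map f
  have hAPf : (s • A.map f + t • N) * P.map f = s • (A * P).map f + t • (N * P.map f) := by
    rw [add_mul, smul_mul, smul_mul, Matrix.map_mul]
  rw [← hS, ← hP.dvd_mul_right, ← det_mul, hAPf]
  refine pow_card_dvd_det_of_dvd_col _ t S fun j hj i => ?_
  simp only [add_apply, smul_apply, map_apply, hAP j hj i, map_zero, smul_eq_mul, mul_zero,
    zero_add]
  exact dvd_mul_right _ _

theorem MvPolynomial.isRelPrime_X_X {σ R : Type*} [CommRing R] [IsDomain R] {i j : σ}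
    (h : i ≠ j) : IsRelPrime (X i : MvPolynomial σ R) (X j) :=
  X_prime.irreducible.isRelPrime_iff_not_dvd.mpr (by simpa using h)

/-- If `K = dim ker A` and `M = dim ker B`, then `det (λ A + μ B)` is divisible by
`λ^M * μ^K`. -/
theorem lambda_mu_pow_dvd_det {k : Type*} [Field k] {n : ℕ}
    (A B : Matrix (Fin n) (Fin n) k)
    (K M : ℕ) (hK : K = Module.finrank k (LinearMap.ker A.mulVecLin))
    (hM : M = Module.finrank k (LinearMap.ker B.mulVecLin)) :
    (X 0 : MvPolynomial (Fin 2) k) ^ M * (X 1) ^ K ∣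
      Matrix.det ((X 0 : MvPolynomial (Fin 2) k) • A.map C + (X 1 : MvPolynomial (Fin 2) k) • B.map C) := by
  refine (isRelPrime_X_X (by decide)).pow.mul_dvd ?_ ?_
  · rw [add_comm, hM]
    exact pow_finrank_ker_dvd_det_smul_map_add_smul C B _ _ _
  · rw [hK]
    exact pow_finrank_ker_dvd_det_smul_map_add_smul C A _ _ _
end

section
/- Let A and B be n×n matrices over an algebraically closed field k, and let C, D be m×m matrices over k. Write χ(λ,μ) = det(λA + μB) = ∏_i (α_i λ + β_i μ) as a product of linear forms. Then det(λ A⊗C + μ B⊗D) = det(∏_i (λ α_i C + μ β_i D)). -/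
/-!
Over an algebraically closed field the pencil `(C, D)` has a simultaneous triangular form
`T = P C Q`, `S = P D Q` with `P, Q` invertible (a generalized Schur form): some `v ≠ 0` has
`C v` and `D v` on a common line, namely a kernel vector of `C` or an eigenvector of `C⁻¹ D`,
and one recurses on the complementary block. Then `A ⊗ T + B ⊗ S` is block upper triangular
with diagonal blocks `T j j • A + S j j • B`, whose determinants factor by the hypothesis as
`∏ i, (α i T j j + β i S j j)`. Exchanging the two products gives `∏ i, det (α i • T + β i • S)`,
and the factors `det P * det Q` on both sides cancel. The argument runs over `k[λ, μ]` itself,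
the hypothesis being specialised by the substitution `λ ↦ T j j λ`, `μ ↦ S j j μ`.
-/

open Matrix Kronecker MvPolynomial

namespace Matrix

section OneBlockDiag

variable {R : Type*} {N : ℕ}

def oneBlockDiag [Zero R] [One R] (X : Matrix (Fin N) (Fin N) R) :
    Matrix (Fin (N + 1)) (Fin (N + 1)) R :=
  of (vecCons (vecCons 1 0) fun i => vecCons 0 (X i))

section
variable [Zero R] [One R] (X : Matrix (Fin N) (Fin N) R)

@[simp] theorem oneBlockDiag_zero_zero : oneBlockDiag X 0 0 = 1 := rfl

@[simp] theorem oneBlockDiag_zero_succ (j : Fin N) : oneBlockDiag X 0 j.succ = 0 := rfl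

@[simp] theorem oneBlockDiag_succ_zero (i : Fin N) : oneBlockDiag X i.succ 0 = 0 := rfl

@[simp] theorem oneBlockDiag_succ_succ (i j : Fin N) : oneBlockDiag X i.succ j.succ = X i j := rfl

end

theorem det_oneBlockDiag [CommRing R] (X : Matrix (Fin N) (Fin N) R) :
    (oneBlockDiag X).det = X.det := by
  rw [det_succ_column_zero, Fin.sum_univ_succ]
  simp [submatrix]
  rfl

theorem isUpperTriangular_of_apply_succ_zero [Zero R] {M : Matrix (Fin (N + 1)) (Fin (N + 1)) R}
    (h₀ : ∀ i : Fin N, M i.succ 0 = 0) (h : (M.submatrix Fin.succ Fin.succ).IsUpperTriangular) :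
    M.IsUpperTriangular := by
  intro i j hij
  induction i using Fin.cases with
  | zero => exact absurd hij (Fin.not_lt_zero j)
  | succ i =>
    induction j using Fin.cases with
    | zero => exact h₀ i
    | succ j => exact h (Fin.succ_lt_succ_iff.1 hij)

theorem isUpperTriangular_oneBlockDiag_mul_mul [NonAssocSemiring R]
    {M : Matrix (Fin (N + 1)) (Fin (N + 1)) R} (h₀ : ∀ i : Fin N, M i.succ 0 = 0)
    {P Q : Matrix (Fin N) (Fin N) R}
    (h : (P * M.submatrix Fin.succ Fin.succ * Q).IsUpperTriangular) :
    (oneBlockDiag P * M * oneBlockDiag Q).IsUpperTriangular := by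
  refine isUpperTriangular_of_apply_succ_zero (fun i => ?_) ?_
  · simp [mul_apply, Fin.sum_univ_succ, h₀]
  · convert h using 1
    ext i j
    simp [mul_apply, Fin.sum_univ_succ, Finset.sum_mul]

end OneBlockDiag

section Triangularization

variable {k : Type*} [Field k] {ι : Type*} [Fintype ι] [DecidableEq ι]

theorem exists_isUnit_det_mulVec_eq {v w : ι → k} (hv : v ≠ 0) (hw : w ≠ 0) :
    ∃ P : Matrix ι ι k, IsUnit P.det ∧ P *ᵥ v = w := by
  obtain ⟨g, hg⟩ := Submodule.exists_linearEquiv_restrict_eq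
    ((LinearEquiv.toSpanNonzeroSingleton k _ v hv).symm ≪≫ₗ
      LinearEquiv.toSpanNonzeroSingleton k _ w hw)
  refine ⟨LinearMap.toMatrix' (g : (ι → k) →ₗ[k] ι → k), ?_, ?_⟩
  · rw [LinearMap.det_toMatrix']
    exact g.isUnit_det'
  · have := hg (LinearEquiv.toSpanNonzeroSingleton k _ v hv 1)
    rw [LinearEquiv.trans_apply, LinearEquiv.symm_apply_apply,
      LinearEquiv.toSpanNonzeroSingleton_one, LinearEquiv.toSpanNonzeroSingleton_one] at this
    rw [LinearMap.toMatrix'_mulVec]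
    exact this.symm

theorem exists_mulVec_eq_smul_of_isAlgClosed [IsAlgClosed k] [Nonempty ι] (C D : Matrix ι ι k) :
    ∃ v u : ι → k, v ≠ 0 ∧ u ≠ 0 ∧ ∃ a b : k, C *ᵥ v = a • u ∧ D *ᵥ v = b • u := by
  by_cases hC : C.det = 0
  · obtain ⟨v, hv, hCv⟩ := exists_mulVec_eq_zero_iff.2 hC
    by_cases hDv : D *ᵥ v = 0
    · exact ⟨v, v, hv, hv, 0, 0, by simp [hCv], by simp [hDv]⟩
    · exact ⟨v, D *ᵥ v, hv, hDv, 0, 1, by simp [hCv], by simp⟩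
  · obtain ⟨μ, hμ⟩ := Module.End.exists_eigenvalue (toLin' (C⁻¹ * D))
    obtain ⟨v, hv⟩ := hμ.exists_hasEigenvector
    have hCv : C *ᵥ v ≠ 0 := fun h => hC (exists_mulVec_eq_zero_iff.1 ⟨v, hv.2, h⟩)
    refine ⟨v, C *ᵥ v, hv.2, hCv, 1, μ, by simp, ?_⟩
    have hEig : (C⁻¹ * D) *ᵥ v = μ • v := by simpa using hv.apply_eq_smul
    rw [← mulVec_smul, ← hEig, mulVec_mulVec,
      mul_nonsing_inv_cancel_left _ _ (isUnit_iff_ne_zero.2 hC)]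

theorem exists_isUnit_det_mul_mul_apply_succ_zero [IsAlgClosed k] {N : ℕ}
    (C D : Matrix (Fin (N + 1)) (Fin (N + 1)) k) :
    ∃ P Q : Matrix (Fin (N + 1)) (Fin (N + 1)) k, IsUnit P.det ∧ IsUnit Q.det ∧
      ∀ i : Fin N, (P * C * Q) i.succ 0 = 0 ∧ (P * D * Q) i.succ 0 = 0 := by
  obtain ⟨v, u, hv, hu, a, b, hCv, hDv⟩ := exists_mulVec_eq_smul_of_isAlgClosed C D
  have he : (Pi.single 0 1 : Fin (N + 1) → k) ≠ 0 := by simp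
  obtain ⟨Q, hQ, hQe⟩ := exists_isUnit_det_mulVec_eq he hv
  obtain ⟨P, hP, hPu⟩ := exists_isUnit_det_mulVec_eq hu he
  have hcol : ∀ (M : Matrix (Fin (N + 1)) (Fin (N + 1)) k) (s : k), M *ᵥ v = s • u →
      ∀ i : Fin N, (P * M * Q) i.succ 0 = 0 := fun M s hM i => by
    have h : (P * M * Q) *ᵥ Pi.single 0 1 = s • Pi.single 0 1 := by
      rw [← mulVec_mulVec, hQe, ← mulVec_mulVec, hM, mulVec_smul, hPu]
    simpa using congrFun h i.succ
  exact ⟨P, Q, hP, hQ, fun i => ⟨hcol C a hCv i, hcol D b hDv i⟩⟩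

theorem exists_isUnit_det_isUpperTriangular_mul_mul [IsAlgClosed k] {N : ℕ}
    (C D : Matrix (Fin N) (Fin N) k) :
    ∃ P Q : Matrix (Fin N) (Fin N) k, IsUnit P.det ∧ IsUnit Q.det ∧
      (P * C * Q).IsUpperTriangular ∧ (P * D * Q).IsUpperTriangular := by
  induction N with
  | zero => exact ⟨1, 1, by simp, by simp, fun i => i.elim0, fun i => i.elim0⟩
  | succ N ih =>
    obtain ⟨P₀, Q₀, hP₀, hQ₀, h₀⟩ := exists_isUnit_det_mul_mul_apply_succ_zero C D
    obtain ⟨P, Q, hP, hQ, hC, hD⟩ := ih ((P₀ * C * Q₀).submatrix Fin.succ Fin.succ)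
      ((P₀ * D * Q₀).submatrix Fin.succ Fin.succ)
    refine ⟨oneBlockDiag P * P₀, Q₀ * oneBlockDiag Q, ?_, ?_, ?_, ?_⟩
    · rw [det_mul, det_oneBlockDiag]; exact hP.mul hP₀
    · rw [det_mul, det_oneBlockDiag]; exact hQ₀.mul hQ
    · simpa only [Matrix.mul_assoc] using
        isUpperTriangular_oneBlockDiag_mul_mul (fun i => (h₀ i).1) hC
    · simpa only [Matrix.mul_assoc] using
        isUpperTriangular_oneBlockDiag_mul_mul (fun i => (h₀ i).2) hD

end Triangularization

section Kronecker

variable {R : Type*} [CommRing R] {ι κ : Type*} [Fintype ι] [DecidableEq ι] [Fintype κ]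
  [DecidableEq κ]

theorem det_kronecker_add_kronecker_of_isUpperTriangular [LinearOrder κ]
    (A B : Matrix ι ι R) {T S : Matrix κ κ R} (hT : T.IsUpperTriangular)
    (hS : S.IsUpperTriangular) :
    (A ⊗ₖ T + B ⊗ₖ S).det = ∏ j, (T j j • A + S j j • B).det := by
  have hM : (A ⊗ₖ T + B ⊗ₖ S).BlockTriangular Prod.snd := fun p q hpq => by
    simp [hT hpq, hS hpq]
  rw [hM.det_fintype]
  refine Finset.prod_congr rfl fun j _ => ?_
  let e : ι ≃ {p : ι × κ // p.2 = j} :=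
    ⟨fun i => ⟨(i, j), rfl⟩, fun p => p.1.1, fun _ => rfl, fun p => by ext <;> simp [p.2]⟩
  rw [← det_submatrix_equiv_self e]
  congr 1
  ext i i'
  simp [e, toSquareBlock_def, mul_comm]

theorem det_kronecker_add_kronecker_mul_mul (A B : Matrix ι ι R) (P C D Q : Matrix κ κ R) :
    (A ⊗ₖ (P * C * Q) + B ⊗ₖ (P * D * Q)).det
      = (P.det * Q.det) ^ Fintype.card ι * (A ⊗ₖ C + B ⊗ₖ D).det := by
  have h (X : Matrix ι ι R) (Y : Matrix κ κ R) :
      X ⊗ₖ (P * Y * Q) = (1 ⊗ₖ P) * (X ⊗ₖ Y) * (1 ⊗ₖ Q) := by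
    rw [← mul_kronecker_mul, ← mul_kronecker_mul, Matrix.one_mul, Matrix.mul_one]
  rw [h A, h B, ← Matrix.add_mul, ← Matrix.mul_add, det_mul, det_mul, det_kronecker,
    det_kronecker]
  simp only [det_one, one_pow, one_mul]
  ring

theorem det_kronecker_add_kronecker_of_det_smul_add_smul [LinearOrder κ]
    {A B : Matrix ι ι R} {α β : ι → R}
    (hAB : ∀ x y : R, (x • A + y • B).det = ∏ i, (α i * x + β i * y))
    (C D : Matrix κ κ R) {P Q : Matrix κ κ R} (hPQ : IsUnit (P.det * Q.det))
    (hC : (P * C * Q).IsUpperTriangular) (hD : (P * D * Q).IsUpperTriangular) :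
    (A ⊗ₖ C + B ⊗ₖ D).det = ∏ i, (α i • C + β i • D).det := by
  set T := P * C * Q
  set S := P * D * Q
  have hpencil (x y : R) : (x • T + y • S).det = P.det * Q.det * (x • C + y • D).det := by
    have : x • T + y • S = P * (x • C + y • D) * Q := by
      simp only [T, S, Matrix.mul_add, Matrix.add_mul, mul_smul_comm, smul_mul_assoc]
    rw [this, det_mul, det_mul, mul_right_comm]
  apply (hPQ.pow (Fintype.card ι)).mul_left_cancel
  calc (P.det * Q.det) ^ Fintype.card ι * (A ⊗ₖ C + B ⊗ₖ D).det
      = (A ⊗ₖ T + B ⊗ₖ S).det := (det_kronecker_add_kronecker_mul_mul A B P C D Q).symm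
    _ = ∏ j, ∏ i, (α i * T j j + β i * S j j) := by
      rw [det_kronecker_add_kronecker_of_isUpperTriangular A B hC hD]
      exact Finset.prod_congr rfl fun j _ => hAB _ _
    _ = ∏ i, (α i • T + β i • S).det := by
      rw [Finset.prod_comm]
      refine Finset.prod_congr rfl fun i _ => ?_
      have hTS : (α i • T + β i • S).IsUpperTriangular := fun j j' h => by simp [hC h, hD h]
      rw [det_of_isUpperTriangular hTS]
      simp
    _ = (P.det * Q.det) ^ Fintype.card ι * ∏ i, (α i • C + β i • D).det := by
      simp only [hpencil, Finset.prod_mul_distrib, Finset.prod_const, Finset.card_univ, mul_pow]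

end Kronecker

theorem map_kronecker {α β F ι κ : Type*} [Mul α] [Mul β] [FunLike F α β] [MulHomClass F α β]
    (f : F) (A : Matrix ι ι α) (B : Matrix κ κ α) :
    (A ⊗ₖ B).map f = A.map f ⊗ₖ B.map f := by
  ext; simp

theorem det_list_prod_map {R ι κ : Type*} [CommRing R] [Fintype κ] [DecidableEq κ]
    (l : List ι) (f : ι → Matrix κ κ R) :
    (l.map f).prod.det = (l.map fun i => (f i).det).prod := by
  simpa [Function.comp_def] using map_list_prod (detMonoidHom : Matrix κ κ R →* R) (l.map f)

end Matrix

theorem MvPolynomial.det_smul_add_smul_of_det_X_smul_add_X_smul {k S ι : Type*} [CommRing k]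
    [CommRing S] [Algebra k S] [Fintype ι] [DecidableEq ι] {A B : Matrix ι ι k} {α β : ι → k}
    (h : det ((X 0 : MvPolynomial (Fin 2) k) • A.map (C : k → MvPolynomial (Fin 2) k)
      + (X 1 : MvPolynomial (Fin 2) k) • B.map (C : k → MvPolynomial (Fin 2) k))
      = ∏ i, (C (α i) * X 0 + C (β i) * X 1)) (x y : S) :
    (x • A.map (algebraMap k S) + y • B.map (algebraMap k S)).det
      = ∏ i, (algebraMap k S (α i) * x + algebraMap k S (β i) * y) := by
  have := congrArg (aeval ![x, y]) h
  rw [AlgHom.map_det] at this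
  convert this using 2
  · ext i j
    simp
  · simp

/-- Extended Cayley theorem: if `det (λA + μB) = ∏ i, (α i λ + β i μ)`, then
`det (λ A⊗C + μ B⊗D) = det (∏ i, (λ α i • C + μ β i • D))` (the matrix product taken
in any fixed order, here the canonical one). -/
theorem extended_cayley {k : Type*} [Field k] [IsAlgClosed k] {n m : ℕ}
    (A B : Matrix (Fin n) (Fin n) k) (C D : Matrix (Fin m) (Fin m) k)
    (α β : Fin n → k)
    (hfac : Matrix.det ((X 0 : MvPolynomial (Fin 2) k) • A.map (MvPolynomial.C : k → MvPolynomial (Fin 2) k)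
        + (X 1 : MvPolynomial (Fin 2) k) • B.map (MvPolynomial.C : k → MvPolynomial (Fin 2) k))
      = ∏ i, (MvPolynomial.C (α i) * X 0 + MvPolynomial.C (β i) * X 1)) :
    Matrix.det ((X 0 : MvPolynomial (Fin 2) k) • (A ⊗ₖ C).map (MvPolynomial.C : k → MvPolynomial (Fin 2) k)
        + (X 1 : MvPolynomial (Fin 2) k) • (B ⊗ₖ D).map (MvPolynomial.C : k → MvPolynomial (Fin 2) k))
      = Matrix.det (((List.finRange n).map fun i =>
          ((MvPolynomial.C (α i) * X 0 : MvPolynomial (Fin 2) k) • C.map (MvPolynomial.C : k → MvPolynomial (Fin 2) k)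
            + (MvPolynomial.C (β i) * X 1 : MvPolynomial (Fin 2) k) • D.map (MvPolynomial.C : k → MvPolynomial (Fin 2) k) :
            Matrix (Fin m) (Fin m) (MvPolynomial (Fin 2) k))).prod) := by
  set R := MvPolynomial (Fin 2) k
  obtain ⟨P, Q, hP, hQ, hC, hD⟩ := exists_isUnit_det_isUpperTriangular_mul_mul C D
  have hAB (x y : R) : (x • (X 0 : R) • A.map (MvPolynomial.C : k → R)
      + y • (X 1 : R) • B.map (MvPolynomial.C : k → R)).det
        = ∏ i, (MvPolynomial.C (α i) * X 0 * x + MvPolynomial.C (β i) * X 1 * y) := by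
    have h := det_smul_add_smul_of_det_X_smul_add_X_smul hfac (x * X 0) (y * X 1)
    rw [MvPolynomial.algebraMap_eq] at h
    rw [smul_smul, smul_smul, h]
    exact Finset.prod_congr rfl fun i _ => by ring
  rw [det_list_prod_map, ← Fin.prod_univ_def, map_kronecker, map_kronecker, ← smul_kronecker,
    ← smul_kronecker]
  refine det_kronecker_add_kronecker_of_det_smul_add_smul hAB _ _
    (P := P.map MvPolynomial.C) (Q := Q.map MvPolynomial.C) ?_ ?_ ?_
  · have := (hP.mul hQ).map (MvPolynomial.C : k →+* R)
    rwa [map_mul, RingHom.map_det, RingHom.map_det] at this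
  · rw [← Matrix.map_mul, ← Matrix.map_mul]
    exact hC.map MvPolynomial.C
  · rw [← Matrix.map_mul, ← Matrix.map_mul]
    exact hD.map MvPolynomial.C
end

section
/- Let 𝔄 be a finite-dimensional associative algebra with unity, g an invertible element of 𝔄, and F a linear functional on 𝔄. Then the characteristic polynomial satisfies χ(λ, μ, Ad*_g F) = (det Ad_g)^(-2) · χ(λ, μ, F), where (Ad*_g F)(Y) = F(g⁻¹ Y g) and Ad_g Y = g Y g⁻¹. -/
open Matrix MvPolynomial Module

/-- Quasi-invariance of the characteristic polynomial under the coadjoint action: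
`χ(λ,μ,Ad*_g F) = (det Ad_g)⁻² ⬝ χ(λ,μ,F)`. -/
theorem char_poly_coadjoint_invariance {k 𝔄 : Type*} [Field k] [Ring 𝔄] [Algebra k 𝔄]
    [FiniteDimensional k 𝔄] {n : ℕ} (b : Basis (Fin n) k 𝔄)
    (g : 𝔄ˣ) (F : Module.Dual k 𝔄)
    (Adg : 𝔄 →ₗ[k] 𝔄) (hAdg : ∀ Y, Adg Y = (g : 𝔄) * Y * (↑g⁻¹ : 𝔄))
    (A A' : Matrix (Fin n) (Fin n) k)
    (hA : ∀ i j, A i j = F (b i * b j))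
    (hA' : ∀ i j, A' i j = F ((↑g⁻¹ : 𝔄) * (b i * b j) * (g : 𝔄))) :
    Matrix.det ((X 0 : MvPolynomial (Fin 2) k) • A'.map (MvPolynomial.C : k → MvPolynomial (Fin 2) k)
        + (X 1 : MvPolynomial (Fin 2) k) • A'ᵀ.map (MvPolynomial.C : k → MvPolynomial (Fin 2) k))
      = MvPolynomial.C ((LinearMap.det Adg)⁻¹ ^ 2) *
        Matrix.det ((X 0 : MvPolynomial (Fin 2) k) • A.map (MvPolynomial.C : k → MvPolynomial (Fin 2) k)
          + (X 1 : MvPolynomial (Fin 2) k) • Aᵀ.map (MvPolynomial.C : k → MvPolynomial (Fin 2) k)) := by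
  classical
  -- the inverse adjoint map
  set T : 𝔄 →ₗ[k] 𝔄 :=
    { toFun := fun Y => (↑g⁻¹ : 𝔄) * Y * (g : 𝔄)
      map_add' := fun x y => by simp [mul_add, add_mul]
      map_smul' := fun c x => by simp [mul_smul_comm, smul_mul_assoc] } with hT
  have hTapp : ∀ Y, T Y = (↑g⁻¹ : 𝔄) * Y * (g : 𝔄) := fun Y => rfl
  -- det T = (det Adg)⁻¹
  have hcomp : T ∘ₗ Adg = LinearMap.id := by
    ext Y
    simp [hTapp, hAdg, mul_assoc]
  have hdet : LinearMap.det T = (LinearMap.det Adg)⁻¹ := by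
    have h1 : LinearMap.det T * LinearMap.det Adg = 1 := by
      rw [← LinearMap.det_comp, hcomp, LinearMap.det_id]
    exact eq_inv_of_mul_eq_one_left h1
  set P : Matrix (Fin n) (Fin n) k := LinearMap.toMatrix b b T with hP
  have hdetP : P.det = (LinearMap.det Adg)⁻¹ := by
    rw [hP, LinearMap.det_toMatrix]
    exact hdet
  -- T (b i) = ∑ l, P l i • b l
  have hTb : ∀ i, T (b i) = ∑ l, P l i • b l := by
    intro i
    have := (b.sum_repr (T (b i))).symm
    simpa [hP, LinearMap.toMatrix_apply] using this
  -- A' = Pᵀ * A * P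
  have hA'eq : A' = Pᵀ * A * P := by
    ext i j
    have key : ((↑g⁻¹ : 𝔄) * (b i * b j) * (g : 𝔄)) = T (b i) * T (b j) := by
      simp [hTapp, mul_assoc]
    have rhs : (Pᵀ * A * P) i j = ∑ m, ∑ l, P l i * A l m * P m j := by
      rw [Matrix.mul_apply]
      refine Finset.sum_congr rfl fun m _ => ?_
      rw [Matrix.mul_apply, Finset.sum_mul]
      refine Finset.sum_congr rfl fun l _ => ?_
      rw [Matrix.transpose_apply]
    rw [hA' i j, key, hTb i, hTb j, Finset.sum_mul_sum, map_sum, rhs, Finset.sum_comm]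
    refine Finset.sum_congr rfl fun l _ => ?_
    rw [map_sum]
    refine Finset.sum_congr rfl fun m _ => ?_
    rw [smul_mul_smul_comm, _root_.map_smul, smul_eq_mul, hA]
    ring
  -- now work over polynomials
  set C2 : k →+* MvPolynomial (Fin 2) k := MvPolynomial.C
  have hmap : ∀ (M N : Matrix (Fin n) (Fin n) k), (M * N).map C2 = M.map C2 * N.map C2 :=
    fun M N => Matrix.map_mul
  have factor :
      (X 0 : MvPolynomial (Fin 2) k) • A'.map C2 + (X 1 : MvPolynomial (Fin 2) k) • A'ᵀ.map C2
        = (Pᵀ.map C2) * ((X 0 : MvPolynomial (Fin 2) k) • A.map C2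
            + (X 1 : MvPolynomial (Fin 2) k) • Aᵀ.map C2) * (P.map C2) := by
    rw [hA'eq]
    have hA't : (Pᵀ * A * P)ᵀ = Pᵀ * Aᵀ * P := by
      simp [Matrix.transpose_mul, Matrix.mul_assoc]
    rw [hA't, hmap, hmap, hmap, hmap, Matrix.mul_add, Matrix.add_mul,
      Matrix.mul_smul, Matrix.mul_smul, Matrix.smul_mul, Matrix.smul_mul]
  rw [factor, Matrix.det_mul, Matrix.det_mul]
  have hdm : (P.map C2).det = C2 P.det := by
    rw [← RingHom.mapMatrix_apply, ← RingHom.map_det]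
  have hdmt : (Pᵀ.map C2).det = C2 P.det := by
    rw [← RingHom.mapMatrix_apply, ← RingHom.map_det, Matrix.det_transpose]
  rw [hdm, hdmt, hdetP, sq, _root_.map_mul]
  ring
end

section
/- For a finite-dimensional Lie algebra 𝔤 over an infinite field, the index of 𝔤 (the minimum over f ∈ 𝔤* of dim ker (f([e_i,e_j]))) equals the kernel dimension of the structure matrix B = ([e_i,e_j]) regarded as a matrix over the field of rational functions on 𝔤*, and equals dim ker B_f for f in a nonempty Zariski-open subset of 𝔤*. -/
/-!
Over the function field of `𝔤*` the rank of the structure matrix is witnessed by a nonzero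
maximal minor `p`, a polynomial on `𝔤*`. Specializing at `f` can only make minors vanish, so
`rank B_f ≤ rank B` for every `f`, with equality wherever `p(f) ≠ 0`; since the field is
infinite, such an `f` exists, and the minimum of `dim ker B_f = n - rank B_f` is `n - rank B`.
-/

open Module Matrix MvPolynomial

namespace Matrix

variable {K : Type*} [Field K] {m l : Type*}

theorem det_submatrix_map {R : Type*} [CommRing R] {r : ℕ} (M : Matrix m l R) (φ : R →+* K)
    (ri : Fin r → m) (ci : Fin r → l) :
    ((M.map φ).submatrix ri ci).det = φ (M.submatrix ri ci).det := by
  rw [RingHom.map_det]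
  rfl

variable [Fintype l]

theorem exists_linearIndependent_cols_of_le_rank {A : Matrix m l K} {r : ℕ} (h : r ≤ A.rank) :
    ∃ c : Fin r → l, LinearIndependent K (A.col ∘ c) := by
  obtain ⟨κ, a, ha, hspan, hli⟩ := exists_linearIndependent' K A.col
  have : Fintype κ := Fintype.ofInjective a ha
  have hrank : A.rank = Fintype.card κ := by
    rw [rank_eq_finrank_span_cols, ← hspan, finrank_span_eq_card hli]
  obtain ⟨e⟩ := Function.Embedding.nonempty_of_card_le (α := Fin r) (β := κ)
    (by rwa [Fintype.card_fin, ← hrank])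
  exact ⟨a ∘ e, hli.comp e e.injective⟩

theorem le_rank_iff_exists_submatrix_det_ne_zero [Fintype m] (A : Matrix m l K) (r : ℕ) :
    r ≤ A.rank ↔ ∃ (ri : Fin r → m) (ci : Fin r → l), (A.submatrix ri ci).det ≠ 0 := by
  constructor
  · intro h
    obtain ⟨ci, hci⟩ := exists_linearIndependent_cols_of_le_rank h
    have hrows : r ≤ (A.submatrix id ci)ᵀ.rank :=
      ((hci : LinearIndependent K (A.submatrix id ci)ᵀ.row).rank_matrix.trans
        (Fintype.card_fin r)).ge
    obtain ⟨ri, hri⟩ := exists_linearIndependent_cols_of_le_rank hrows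
    have hunit : IsUnit (A.submatrix ri ci) := linearIndependent_rows_iff_isUnit.mp hri
    exact ⟨ri, ci, ((isUnit_iff_isUnit_det _).mp hunit).ne_zero⟩
  · rintro ⟨ri, ci, hdet⟩
    simpa using (rank_of_det_ne_zero hdet).symm.trans_le (A.rank_submatrix_le ri ci)

theorem finrank_ker_mulVecLin (A : Matrix m l K) :
    finrank K (LinearMap.ker A.mulVecLin) = Fintype.card l - A.rank := by
  have := LinearMap.finrank_range_add_finrank_ker A.mulVecLin
  rw [finrank_fintype_fun_eq_card] at this
  exact Nat.eq_sub_of_add_eq' this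

section Specialization

variable {R : Type*} [CommRing R] {K' : Type*} [Field K'] [Fintype m]

theorem rank_map_le_of_ker_le {φ : R →+* K} {ψ : R →+* K'} (h : ∀ x, ψ x = 0 → φ x = 0)
    (M : Matrix m l R) : (M.map φ).rank ≤ (M.map ψ).rank := by
  obtain ⟨ri, ci, hdet⟩ := ((M.map φ).le_rank_iff_exists_submatrix_det_ne_zero _).mp le_rfl
  rw [det_submatrix_map] at hdet
  refine ((M.map ψ).le_rank_iff_exists_submatrix_det_ne_zero _).mpr ⟨ri, ci, ?_⟩
  rw [det_submatrix_map]
  exact mt (h _) hdet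

theorem exists_rank_map_le (M : Matrix m l R) (ψ : R →+* K') :
    ∃ p : R, ψ p ≠ 0 ∧ ∀ φ : R →+* K, φ p ≠ 0 → (M.map ψ).rank ≤ (M.map φ).rank := by
  obtain ⟨ri, ci, hdet⟩ := ((M.map ψ).le_rank_iff_exists_submatrix_det_ne_zero _).mp le_rfl
  rw [det_submatrix_map] at hdet
  refine ⟨_, hdet, fun φ hφ => ((M.map φ).le_rank_iff_exists_submatrix_det_ne_zero _).mpr
    ⟨ri, ci, ?_⟩⟩
  rwa [det_submatrix_map]

end Specialization

end Matrix

theorem Module.Basis.exists_dual_eval_ne_zero {k V ι : Type*} [Field k] [Infinite k]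
    [AddCommGroup V] [Module k V] (b : Basis ι k V) {p : MvPolynomial ι k} (hp : p ≠ 0) :
    ∃ f : Module.Dual k V, eval (fun i => f (b i)) p ≠ 0 := by
  obtain ⟨c, hc⟩ : ∃ c, eval c p ≠ 0 := by
    by_contra! h
    exact hp (MvPolynomial.funext fun c => by simpa using h c)
  exact ⟨b.constr k c, by simpa [Basis.constr_basis] using hc⟩

section StructureMatrix

variable {k L ι : Type*} [Field k] [LieRing L] [LieAlgebra k L] [Fintype ι]

noncomputable def lieStructureMatrix (b : Basis ι k L) : Matrix ι ι (MvPolynomial ι k) :=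
  of fun i j => ∑ m, C (b.repr ⁅b i, b j⁆ m) * X m

variable (b : Basis ι k L)

theorem lieStructureMatrix_map_eval (f : Module.Dual k L) :
    (lieStructureMatrix b).map (eval fun m => f (b m)) = of fun i j => f ⁅b i, b j⁆ := by
  ext i j
  simp only [lieStructureMatrix, map_apply, of_apply, map_sum, eval_mul, eval_C, eval_X]
  conv_rhs => rw [← b.sum_repr ⁅b i, b j⁆, map_sum]
  simp only [map_smul, smul_eq_mul]

theorem rank_lie_le_rank_lieStructureMatrix (f : Module.Dual k L) :
    (of fun i j => f ⁅b i, b j⁆).rank ≤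
      ((lieStructureMatrix b).map (algebraMap _ (FractionRing (MvPolynomial ι k)))).rank := by
  rw [← lieStructureMatrix_map_eval]
  refine rank_map_le_of_ker_le (fun x hx => ?_) _
  rw [IsFractionRing.to_map_eq_zero_iff.mp hx, map_zero]

theorem exists_rank_lie_eq_rank_lieStructureMatrix :
    ∃ p : MvPolynomial ι k, p ≠ 0 ∧ ∀ f : Module.Dual k L, eval (fun m => f (b m)) p ≠ 0 →
      (of fun i j => f ⁅b i, b j⁆).rank =
        ((lieStructureMatrix b).map (algebraMap _ (FractionRing (MvPolynomial ι k)))).rank := by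
  obtain ⟨p, hp, hge⟩ := exists_rank_map_le (K := k) (lieStructureMatrix b)
    (algebraMap _ (FractionRing (MvPolynomial ι k)))
  refine ⟨p, fun hp₀ => hp (by rw [hp₀, map_zero]), fun f hf => ?_⟩
  refine (rank_lie_le_rank_lieStructureMatrix b f).antisymm ?_
  rw [← lieStructureMatrix_map_eval]
  exact hge _ hf

end StructureMatrix

/-- For a finite-dimensional Lie algebra over an infinite field, the index (minimum over
`f ∈ 𝔤*` of `dim ker (f ⁅eᵢ,eⱼ⁆)`) equals the kernel dimension of the structure matrix over
the field of rational functions on `𝔤*`, and is attained on a nonempty Zariski-open set. -/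
theorem lie_index_generic {k L : Type*} [Field k] [Infinite k]
    [LieRing L] [LieAlgebra k L] {n : ℕ} (b : Basis (Fin n) k L)
    (Bpoly : Matrix (Fin n) (Fin n) (FractionRing (MvPolynomial (Fin n) k)))
    (hBpoly : ∀ i j, Bpoly i j = algebraMap (MvPolynomial (Fin n) k) _
      (∑ m, MvPolynomial.C (b.repr ⁅b i, b j⁆ m) * X m))
    (Bf : Module.Dual k L → Matrix (Fin n) (Fin n) k)
    (hBf : ∀ f i j, Bf f i j = f ⁅b i, b j⁆)
    (ind : ℕ)
    (hind : ind = sInf { d | ∃ f : Module.Dual k L,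
      d = Module.finrank k (LinearMap.ker (Bf f).mulVecLin) }) :
    ind = Module.finrank (FractionRing (MvPolynomial (Fin n) k))
        (LinearMap.ker Bpoly.mulVecLin) ∧
    ∃ p : MvPolynomial (Fin n) k, p ≠ 0 ∧ ∀ f : Module.Dual k L,
      MvPolynomial.eval (fun m => f (b m)) p ≠ 0 →
        Module.finrank k (LinearMap.ker (Bf f).mulVecLin) = ind := by
  have hB : (lieStructureMatrix b).map (algebraMap _ _) = Bpoly := (Matrix.ext hBpoly).symm
  obtain rfl : Bf = fun f => of fun i j => f ⁅b i, b j⁆ := funext fun f => Matrix.ext (hBf f)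
  simp only [finrank_ker_mulVecLin, Fintype.card_fin] at hind ⊢
  obtain ⟨p, hp, hgeneric⟩ := exists_rank_lie_eq_rank_lieStructureMatrix b
  have hle := rank_lie_le_rank_lieStructureMatrix b
  rw [hB] at hle hgeneric
  obtain ⟨f₀, hf₀⟩ := b.exists_dual_eval_ne_zero hp
  have hind' : ind = n - Bpoly.rank := by
    refine hind ▸ IsLeast.csInf_eq ⟨⟨f₀, by rw [hgeneric f₀ hf₀]⟩, ?_⟩
    rintro d ⟨f, rfl⟩
    exact Nat.sub_le_sub_left (hle f) n
  exact ⟨hind', p, hp, fun f hf => by rw [hgeneric f hf, hind']⟩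
end

section
/- For the matrix algebra Mat_n over an algebraically closed field, the characteristic polynomial at a point F ∈ Mat_n* (identified with a matrix via the trace pairing) equals (−1)^{n(n−1)/2} det(F) (λ+μ)^n ∏_{i≠j} (λ α_i + μ α_j), where α_1,…,α_n are the eigenvalues of F. -/
/-!
Read in the basis of matrix units, `λ A_F + μ A_Fᵀ` is the Kronecker matrix of the operator
`X ↦ λ FᵀX + μ XFᵀ` on `Mat_n`, with its columns permuted by `E_{lm} ↦ E_{ml}`, a permutation of
sign `(-1)^(n(n-1)/2)`. Conjugating `F` conjugates that operator, so we may take `F` lower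
triangular; its Kronecker matrix is then triangular for the lexicographic order on
`(i, toDual j)`, with diagonal entries `λ αᵢ + μ αⱼ`. The pairs `i = j` contribute
`det F (λ + μ)^n`.
-/

open Matrix MvPolynomial Module Kronecker

namespace Module.Basis

variable {R M : Type*} [Ring R] [AddCommGroup M] [Module R M] {n : ℕ} {N : Submodule R M}

theorem mkFinCons_equivFun_coe (y : M) (b : Basis (Fin n) R N)
    (hli : ∀ (c : R), ∀ x ∈ N, c • y + x = 0 → c = 0) (hsp : ∀ z : M, ∃ c : R, z + c • y ∈ N)
    (x : N) : (mkFinCons y b hli hsp).equivFun x = Fin.cons 0 (b.equivFun x) := by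
  apply (mkFinCons y b hli hsp).equivFun.symm.injective
  rw [LinearEquiv.symm_apply_apply, equivFun_symm_apply, Fin.sum_univ_succ, coe_mkFinCons]
  simp only [Fin.cons_zero, Fin.cons_succ, zero_smul, zero_add, Function.comp_apply]
  conv_lhs => rw [← b.sum_equivFun x]
  push_cast
  rfl

end Module.Basis

namespace Module.End

variable {K : Type*} [Field K] [IsAlgClosed K]

theorem exists_ne_zero_dual_comp_eq_smul {V : Type*} [AddCommGroup V] [Module K V]
    [FiniteDimensional K V] [Nontrivial V] (f : End K V) :
    ∃ (φ : Dual K V) (a : K), φ ≠ 0 ∧ φ ∘ₗ f = a • φ := by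
  obtain ⟨a, ha⟩ := exists_eigenvalue (Dual.transpose (R := K) f)
  obtain ⟨φ, hφ⟩ := ha.exists_hasEigenvector
  exact ⟨φ, a, hφ.2, hφ.apply_eq_smul⟩

/-- The kernel of an eigenvector of the dual map is an invariant hyperplane; a vector outside it
followed by a triangularizing basis of the hyperplane triangularizes `f`. -/
theorem exists_basis_isLowerTriangular :
    ∀ (n : ℕ) {V : Type*} [AddCommGroup V] [Module K V] [FiniteDimensional K V],
    finrank K V = n → ∀ f : End K V,
      ∃ b : Basis (Fin n) K V, (LinearMap.toMatrix b b f).IsLowerTriangular := by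
  intro n
  induction n with
  | zero =>
    intro V _ _ _ hV f
    have := finrank_zero_iff.mp hV
    exact ⟨Basis.empty _, fun i => i.elim0⟩
  | succ n ih =>
    intro V _ _ _ hV f
    have := nontrivial_of_finrank_eq_succ hV
    obtain ⟨φ, a, hφ, hφf⟩ := exists_ne_zero_dual_comp_eq_smul f
    have hinv : ∀ x ∈ LinearMap.ker φ, f x ∈ LinearMap.ker φ := fun x hx => by
      simp_all [← LinearMap.comp_apply]
    obtain ⟨y, hy⟩ : ∃ y, φ y = 1 := LinearMap.surjective hφ 1
    have hN : finrank K (LinearMap.ker φ) = n := by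
      have := Dual.finrank_ker_add_one_of_ne_zero hφ
      omega
    obtain ⟨bN, hbN⟩ := ih hN (f.restrict hinv)
    have hli : ∀ (c : K), ∀ x ∈ LinearMap.ker φ, c • y + x = 0 → c = 0 := fun c x hx h => by
      simpa [hy, LinearMap.mem_ker.mp hx] using congrArg φ h
    have hsp : ∀ z : V, ∃ c : K, z + c • y ∈ LinearMap.ker φ := fun z => ⟨-φ z, by simp [hy]⟩
    refine ⟨Basis.mkFinCons y bN hli hsp, fun i j hij => ?_⟩
    obtain ⟨j, rfl⟩ := Fin.exists_succ_eq.mpr (Fin.ne_zero_of_lt hij)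
    rw [LinearMap.toMatrix_apply, Basis.coe_mkFinCons, Fin.cons_succ, Function.comp_apply,
      ← LinearMap.coe_restrict_apply hinv, ← Basis.equivFun_apply, Basis.mkFinCons_equivFun_coe]
    cases i using Fin.cases with
    | zero => rfl
    | succ i =>
      rw [Fin.cons_succ, Basis.equivFun_apply, ← LinearMap.toMatrix_apply]
      exact hbN (Fin.succ_lt_succ_iff.mp hij)

end Module.End

theorem Equiv.Perm.sign_prodComm (ι : Type*) [Fintype ι] [DecidableEq ι] :
    sign (Equiv.prodComm ι ι) = (-1) ^ (Fintype.card ι * (Fintype.card ι - 1) / 2) := by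
  have hsq : (Equiv.prodComm ι ι : Perm (ι × ι)) ^ 2 = 1 := by ext <;> rfl
  have hfix : Fintype.card (Function.fixedPoints (Equiv.prodComm ι ι)) = Fintype.card ι :=
    Fintype.card_congr ⟨fun p => p.1.1, fun i => ⟨(i, i), rfl⟩,
      fun p => Subtype.ext (Prod.ext rfl (Prod.ext_iff.mp p.2).2), fun _ => rfl⟩
  rw [sign_of_pow_two_eq_one hsq, hfix, Fintype.card_prod, Nat.mul_sub_one]

theorem Fintype.prod_prod_type_comp_eq_of_map_eq {ι κ M : Type*} [Fintype ι] [CommMonoid M]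
    {d e : ι → κ} (h : Finset.univ.val.map d = Finset.univ.val.map e) (g : κ → κ → M) :
    ∏ p : ι × ι, g (d p.1) (d p.2) = ∏ p : ι × ι, g (e p.1) (e p.2) := by
  have key : ∀ f : κ → M, ∏ i, f (d i) = ∏ i, f (e i) := fun f => by
    simpa [Multiset.map_map, Finset.prod_map_val] using congrArg (fun s => (s.map f).prod) h
  simp only [Fintype.prod_prod_type, key]
  exact key fun a => ∏ j, g a (e j)

theorem Polynomial.roots_fintype_prod_X_sub_C {ι R : Type*} [Fintype ι] [CommRing R] [IsDomain R]
    (f : ι → R) : (∏ i, (Polynomial.X - Polynomial.C (f i))).roots = Finset.univ.val.map f := by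
  simpa [Multiset.map_map, Finset.prod_map_val] using
    roots_multiset_prod_X_sub_C (Finset.univ.val.map f)

namespace Matrix

theorem exists_isLowerTriangular_conj {K : Type*} [Field K] [IsAlgClosed K] {n : ℕ}
    (F : Matrix (Fin n) (Fin n) K) :
    ∃ P Q T : Matrix (Fin n) (Fin n) K,
      P * Q = 1 ∧ Q * P = 1 ∧ T.IsLowerTriangular ∧ F = P * T * Q := by
  obtain ⟨b, hb⟩ := End.exists_basis_isLowerTriangular n (finrank_fin_fun K) F.toLin'
  let c := Pi.basisFun K (Fin n)
  refine ⟨c.toMatrix b, b.toMatrix c, _, c.toMatrix_mul_toMatrix_flip b,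
    b.toMatrix_mul_toMatrix_flip c, hb, ?_⟩
  rw [basis_toMatrix_mul_linearMap_toMatrix_mul_basis_toMatrix, LinearMap.toMatrix_eq_toMatrix',
    LinearMap.toMatrix'_toLin']

variable {n R : Type*} [Fintype n] [DecidableEq n] [CommRing R]

theorem charpoly_of_isLowerTriangular [LinearOrder n] (M : Matrix n n R)
    (h : M.IsLowerTriangular) : M.charpoly = ∏ i, (Polynomial.X - Polynomial.C (M i i)) := by
  simp [charpoly, det_of_isLowerTriangular _ h.charmatrix]

theorem trace_mul_single_one_mul_single_one (F : Matrix n n R) (i j l m : n) :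
    (F * (single i j 1 * single l m 1)).trace = if j = l then F m i else 0 := by
  split_ifs with h
  · subst h
    simp [single_mul_single_same, trace_mul_single]
  · simp [single_mul_single_of_ne, h]

theorem BlockTriangular.det_of_injective {α : Type*} [LinearOrder α] {M : Matrix n n R}
    {b : n → α} (hM : M.BlockTriangular b) (hb : Function.Injective b) :
    M.det = ∏ i, M i i := by
  let e := Equiv.ofInjective b hb
  have hup : (M.submatrix e.symm e.symm).IsUpperTriangular := fun i j hij => by
    apply hM
    simpa [e, Equiv.apply_ofInjective_symm] using hij
  rw [← det_submatrix_equiv_self e.symm, det_of_isUpperTriangular hup]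
  exact e.symm.prod_comp fun i => M i i

/-- The matrix of `X ↦ x • (Fᵀ * X) + y • (X * Fᵀ)` on `Matrix n n R`, in the basis of matrix
units. -/
def sylvesterPencil (x y : R) (F : Matrix n n R) : Matrix (n × n) (n × n) R :=
  x • (Fᵀ ⊗ₖ 1) + y • (1 ⊗ₖ F)

theorem sylvesterPencil_conj (x y : R) {P Q : Matrix n n R} (hPQ : P * Q = 1) (T : Matrix n n R) :
    sylvesterPencil x y (P * T * Q) = (Qᵀ ⊗ₖ P) * sylvesterPencil x y T * (Pᵀ ⊗ₖ Q) := by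
  have hQP : Qᵀ * Pᵀ = 1 := by rw [← transpose_mul, hPQ, transpose_one]
  simp only [sylvesterPencil, Matrix.mul_add, Matrix.add_mul, Matrix.mul_smul, Matrix.smul_mul,
    ← mul_kronecker_mul, transpose_mul, Matrix.mul_one, hPQ, hQP, Matrix.mul_assoc]

theorem det_sylvesterPencil_conj (x y : R) {P Q : Matrix n n R} (hPQ : P * Q = 1)
    (T : Matrix n n R) :
    (sylvesterPencil x y (P * T * Q)).det = (sylvesterPencil x y T).det := by
  have hQP : Qᵀ * Pᵀ = 1 := by rw [← transpose_mul, hPQ, transpose_one]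
  have hunit : (Qᵀ ⊗ₖ P).det * (Pᵀ ⊗ₖ Q).det = 1 := by
    rw [← det_mul, ← mul_kronecker_mul, hQP, hPQ, one_kronecker_one, det_one]
  rw [sylvesterPencil_conj x y hPQ, det_mul, det_mul, mul_right_comm, hunit, one_mul]

theorem IsLowerTriangular.det_sylvesterPencil [LinearOrder n] {T : Matrix n n R}
    (hT : T.IsLowerTriangular) (x y : R) :
    (sylvesterPencil x y T).det = ∏ p : n × n, (x * T p.1 p.1 + y * T p.2 p.2) := by
  have htri : (sylvesterPencil x y T).BlockTriangular
      fun p => toLex (p.1, OrderDual.toDual p.2) := by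
    rintro ⟨a, b⟩ ⟨c, d⟩ hlt
    rcases Prod.Lex.toLex_lt_toLex.mp hlt with hca | ⟨rfl, hbd⟩
    · simp [sylvesterPencil, hT hca, one_apply_ne hca.ne']
    · simp [sylvesterPencil, hT hbd, one_apply_ne (OrderDual.toDual_lt_toDual.mp hbd).ne]
  rw [htri.det_of_injective fun p q h => by simpa [Prod.ext_iff] using h]
  simp [sylvesterPencil]

theorem det_sylvesterPencil_map_of_charpoly_eq_prod {K : Type*} [Field K] [IsAlgClosed K]
    [Algebra K R] {n : ℕ} (F : Matrix (Fin n) (Fin n) K) (α : Fin n → K)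
    (hα : F.charpoly = ∏ i, (Polynomial.X - Polynomial.C (α i))) (x y : R) :
    (sylvesterPencil x y (F.map (algebraMap K R))).det =
      ∏ p : Fin n × Fin n, (x * algebraMap K R (α p.1) + y * algebraMap K R (α p.2)) := by
  obtain ⟨P, Q, T, hPQ, hQP, hT, rfl⟩ := exists_isLowerTriangular_conj F
  have hdiag : Finset.univ.val.map (fun i => T i i) = Finset.univ.val.map α := by
    rw [← Polynomial.roots_fintype_prod_X_sub_C, ← Polynomial.roots_fintype_prod_X_sub_C, ← hα,
      charpoly_mul_comm, ← mul_assoc, hQP, one_mul, charpoly_of_isLowerTriangular _ hT]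
  have hPQR : P.map (algebraMap K R) * Q.map (algebraMap K R) = 1 := by
    rw [← Matrix.map_mul, hPQ, Matrix.map_one _ (map_zero _) (map_one _)]
  have hTR : (T.map (algebraMap K R)).IsLowerTriangular := fun i j h => by simp [hT h]
  rw [Matrix.map_mul, Matrix.map_mul, det_sylvesterPencil_conj x y hPQR,
    hTR.det_sylvesterPencil]
  exact Fintype.prod_prod_type_comp_eq_of_map_eq hdiag
    fun a b => x * algebraMap K R a + y * algebraMap K R b

end Matrix

/-- The characteristic polynomial of the matrix algebra `Mat_n` at a point `F`
(identified with a matrix via the trace pairing) equals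
`(−1)^(n(n−1)/2) det F (λ+μ)^n ∏_{i≠j} (λ αᵢ + μ αⱼ)` where `αᵢ` are the eigenvalues of `F`. -/
theorem char_poly_matrix_algebra {k : Type*} [Field k] [IsAlgClosed k] {n : ℕ}
    (F : Matrix (Fin n) (Fin n) k) (α : Fin n → k)
    (hα : F.charpoly = ∏ i, (Polynomial.X - Polynomial.C (α i)))
    (AF : Matrix (Fin n × Fin n) (Fin n × Fin n) k)
    (hAF : ∀ p q : Fin n × Fin n, AF p q =
      Matrix.trace (F * (Matrix.single p.1 p.2 (1 : k) *
        Matrix.single q.1 q.2 (1 : k)))) :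
    Matrix.det ((X 0 : MvPolynomial (Fin 2) k) •
          AF.map (MvPolynomial.C : k → MvPolynomial (Fin 2) k)
        + (X 1 : MvPolynomial (Fin 2) k) •
          AFᵀ.map (MvPolynomial.C : k → MvPolynomial (Fin 2) k))
      = (-1 : MvPolynomial (Fin 2) k) ^ (n * (n - 1) / 2) * MvPolynomial.C F.det *
        (X 0 + X 1) ^ n *
        ∏ p ∈ Finset.univ.filter (fun p : Fin n × Fin n => p.1 ≠ p.2),
          (MvPolynomial.C (α p.1) * X 0 + MvPolynomial.C (α p.2) * X 1) := by
  have hpencil : (X 0 : MvPolynomial (Fin 2) k) • AF.map (C : k → MvPolynomial (Fin 2) k) +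
      (X 1 : MvPolynomial (Fin 2) k) • AFᵀ.map (C : k → MvPolynomial (Fin 2) k) =
      (sylvesterPencil (X 0) (X 1) (F.map (algebraMap k _))).submatrix id
        (Equiv.prodComm (Fin n) (Fin n)) := by
    refine Matrix.ext fun ⟨i, j⟩ ⟨l, m⟩ => ?_
    simp only [hAF, trace_mul_single_one_mul_single_one, sylvesterPencil, Matrix.add_apply,
      Matrix.smul_apply, map_apply, transpose_apply, submatrix_apply, kroneckerMap_apply,
      one_apply, algebraMap_eq]
    split_ifs <;> simp_all
  have hdet : F.det = ∏ i, α i := by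
    rw [det_eq_prod_roots_charpoly, hα, Polynomial.roots_fintype_prod_X_sub_C, Finset.prod_map_val]
  have hdiag : ∏ p ∈ Finset.univ.filter (fun p : Fin n × Fin n => p.1 = p.2),
      (C (α p.1) * X 0 + C (α p.2) * X 1 : MvPolynomial (Fin 2) k) = C F.det * (X 0 + X 1) ^ n := by
    rw [← Finset.univ_product_univ, ← Finset.diag_eq_filter, Finset.diag, Finset.prod_map]
    simp only [Function.Embedding.coeFn_mk, Function.diag, ← mul_add]
    rw [Finset.prod_mul_distrib, Finset.prod_const, Finset.card_univ, Fintype.card_fin, ← map_prod,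
      hdet]
  rw [hpencil, det_permute', Equiv.Perm.sign_prodComm,
    det_sylvesterPencil_map_of_charpoly_eq_prod F α hα,
    ← Finset.prod_filter_mul_prod_filter_not Finset.univ (fun p : Fin n × Fin n => p.1 = p.2)]
  simp only [algebraMap_eq, Fintype.card_fin, mul_comm (X _ : MvPolynomial (Fin 2) k), hdiag]
  push_cast
  ring
end

section
/- Let 𝔄 be a finite-dimensional associative algebra, F ∈ 𝔄*, and suppose the symmetric form Q_F(a,b) = F(ab) on Stab_F is non-degenerate. Then the maximal power of (λ+μ) dividing χ(λ,μ,F) = det(λ A_F + μ A_Fᵀ) equals dim Stab_F. -/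
/-!
In a basis adapted to a decomposition `𝔄 = T ⊕ Stab_F`, the Gram matrix `G` of `(a, b) ↦ F(ab)`
satisfies `G x s = G s x` whenever `s` indexes `Stab_F`, so each of the `dim Stab_F` corresponding
columns of `λG + μGᵀ` is `(λ + μ)` times a constant column. After factoring these out, specialise
`λ = -t, μ = t`: the remaining matrix becomes block triangular with diagonal blocks
`t (Gᵀ - G)|_T` and `G|_{Stab_F}`. Both are nonsingular, the first because `F(ab) - F(ba)` is
non-degenerate on `T` (otherwise `a ∈ T ∩ Stab_F`), the second because `Q_F` is non-degenerate,
so `λ + μ` does not divide the cofactor. A change of basis only multiplies the determinant by a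
nonzero square.
-/

open Matrix MvPolynomial Module

namespace Matrix

variable {k ι κ : Type*} [Field k]

/-- The pencil `λ A + μ Aᵀ`, with `λ = X 0` and `μ = X 1`. -/
noncomputable def pencil (A : Matrix ι ι k) : Matrix ι ι (MvPolynomial (Fin 2) k) :=
  (X 0 : MvPolynomial (Fin 2) k) • A.map C + (X 1 : MvPolynomial (Fin 2) k) • Aᵀ.map C

theorem pencil_transpose_mul_mul [Fintype ι] (A P : Matrix ι ι k) :
    pencil (Pᵀ * A * P) = (P.map C)ᵀ * pencil A * P.map C := by
  simp only [pencil, transpose_mul, transpose_transpose, Matrix.map_mul, transpose_map,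
    Matrix.mul_add, Matrix.add_mul, Matrix.mul_smul, Matrix.smul_mul, Matrix.mul_assoc]

theorem pencil_submatrix (A : Matrix ι ι k) (e : κ ≃ ι) :
    pencil (A.submatrix e e) = (pencil A).submatrix e e :=
  rfl

variable [Fintype ι] [Fintype κ] [DecidableEq ι] [DecidableEq κ]

theorem det_pencil_eq_pow_mul (G : Matrix (ι ⊕ κ) (ι ⊕ κ) k)
    (hsymm : ∀ x j, G x (Sum.inr j) = G (Sum.inr j) x)
    (hskew : (Gᵀ - G).toBlocks₁₁.det ≠ 0) (hG : G.toBlocks₂₂.det ≠ 0) :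
    ∃ q, (pencil G).det = (X 0 + X 1) ^ Fintype.card κ * q ∧ ¬ (X 0 + X 1) ∣ q := by
  set N : Matrix (ι ⊕ κ) (ι ⊕ κ) (MvPolynomial (Fin 2) k) := of fun x y =>
    Sum.elim (fun i => X 0 * C (G x (.inl i)) + X 1 * C (G (.inl i) x))
      (fun j => C (G x (.inr j))) y
  have hfactor : pencil G = N * diagonal (Sum.elim 1 fun _ => X 0 + X 1) := by
    refine Matrix.ext fun x y => ?_
    rcases y with i | j
    · simp [pencil, N]
    · simp only [pencil, add_apply, smul_apply, map_apply, hsymm x j, smul_eq_mul,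
        transpose_apply, mul_diagonal, of_apply, Sum.elim_inr, N]
      ring
  have hdet : (pencil G).det = (X 0 + X 1) ^ Fintype.card κ * N.det := by
    rw [hfactor, det_mul, det_diagonal, Fintype.prod_sum_type]
    simp [mul_comm]
  refine ⟨N.det, hdet, ?_⟩
  set ev : MvPolynomial (Fin 2) k →ₐ[k] Polynomial k := aeval ![-Polynomial.X, Polynomial.X]
  have hev : N.map ev = fromBlocks ((Polynomial.X : Polynomial k) • (Gᵀ - G).toBlocks₁₁.map
      Polynomial.C) (G.toBlocks₁₂.map Polynomial.C) 0 (G.toBlocks₂₂.map Polynomial.C) := by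
    refine Matrix.ext fun x y => ?_
    rcases x with i | i <;> rcases y with j | j
    · simp only [map_apply, of_apply, Sum.elim_inl, map_add, map_mul, aeval_X, cons_val_zero,
        algHom_C, Polynomial.algebraMap_eq, neg_mul, Polynomial.X_mul_C, cons_val_one,
        cons_val_fin_one, toBlocks₁₁, sub_apply, transpose_apply, fromBlocks_apply₁₁, smul_apply,
        map_sub, smul_eq_mul, N, ev]
      ring
    · simp [N, ev, toBlocks₁₂]
    · simp [N, ev, hsymm (.inl j) i]
    · simp [N, ev, toBlocks₂₂]
  have hdet_ev : ev N.det ≠ 0 := by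
    rw [AlgHom.map_det, AlgHom.mapMatrix_apply, hev, det_fromBlocks_zero₂₁, det_smul]
    simp [← RingHom.mapMatrix_apply, ← RingHom.map_det, hskew, hG]
  have hev_sum : ev (X 0 + X 1) = 0 := by simp [ev]
  rintro ⟨r, hr⟩
  exact hdet_ev (by rw [hr, map_mul, hev_sum, zero_mul])

end Matrix

namespace LinearMap

variable {k V ι : Type*} [Field k] [AddCommGroup V] [Module k V] [Fintype ι] [DecidableEq ι]

theorem associated_det_pencil_toMatrix₂ {κ : Type*} [Fintype κ] [DecidableEq κ]
    (β : V →ₗ[k] V →ₗ[k] k) (b : Basis ι k V) (c : Basis κ k V) :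
    Associated (toMatrix₂ b b β).pencil.det (toMatrix₂ c c β).pencil.det := by
  let c' := c.reindex (c.indexEquiv b)
  have hreindex : toMatrix₂ c' c' β
      = (toMatrix₂ c c β).submatrix (c.indexEquiv b).symm (c.indexEquiv b).symm := by
    ext i j; simp [c', toMatrix₂_apply]
  have hdet := congrArg (fun M => M.pencil.det)
    ((toMatrix₂_mul_basis_toMatrix b b c' c' β).trans hreindex)
  simp only [Matrix.pencil_transpose_mul_mul, Matrix.pencil_submatrix,
    Matrix.det_submatrix_equiv_self, Matrix.det_mul, Matrix.det_transpose] at hdet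
  have hunit : IsUnit ((b.toMatrix c').map (C : k → MvPolynomial (Fin 2) k)).det := by
    rw [← RingHom.mapMatrix_apply, ← RingHom.map_det]
    exact (Matrix.isUnit_det_of_right_inverse (Basis.toMatrix_mul_toMatrix_flip b c')).map C
  rw [← hdet, mul_comm, ← mul_assoc]
  exact associated_unit_mul_right _ _ (hunit.mul hunit)

theorem exists_det_pencil_toMatrix₂_associated [FiniteDimensional k V]
    (β : V →ₗ[k] V →ₗ[k] k) (S : Submodule k V) (hS : ∀ a, a ∈ S ↔ ∀ x, β a x = β x a)
    (hnd : (β.domRestrict₁₂ S S).SeparatingLeft) (b : Basis ι k V) :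
    ∃ q, Associated (toMatrix₂ b b β).pencil.det ((X 0 + X 1) ^ finrank k S * q) ∧
      ¬ (X 0 + X 1) ∣ q := by
  obtain ⟨T, hST⟩ := S.exists_isCompl
  let c := ((finBasis k T).prod (finBasis k S)).map (T.prodEquivOfIsCompl S hST.symm)
  have hc_inl (i) : c (.inl i) = finBasis k T i := by simp [c]
  have hc_inr (j) : c (.inr j) = finBasis k S j := by simp [c]
  have hsymm : ∀ x j, toMatrix₂ c c β x (.inr j) = toMatrix₂ c c β (.inr j) x := fun x j => by
    simp only [toMatrix₂_apply, hc_inr]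
    exact ((hS _).mp (Submodule.coe_mem _) _).symm
  have hG : (toMatrix₂ c c β).toBlocks₂₂
      = toMatrix₂ (finBasis k S) (finBasis k S) (β.domRestrict₁₂ S S) := by
    ext i j; simp only [Matrix.toBlocks₂₂, toMatrix₂_apply, hc_inr, Matrix.of_apply]; rfl
  have hskew : ((toMatrix₂ c c β)ᵀ - toMatrix₂ c c β).toBlocks₁₁
      = toMatrix₂ (finBasis k T) (finBasis k T) ((β.flip - β).domRestrict₁₂ T T) := by
    ext i j
    simp only [Matrix.toBlocks₁₁, Matrix.sub_apply, Matrix.transpose_apply, toMatrix₂_apply,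
      hc_inl, Matrix.of_apply]
    rfl
  have hskew_sep : ((β.flip - β).domRestrict₁₂ T T).SeparatingLeft := by
    intro a ha
    have haS : (a : V) ∈ S := by
      rw [hS]
      intro x
      obtain ⟨y, hy, s, hs, rfl⟩ :=
        Submodule.mem_sup.mp (hST.symm.sup_eq_top ▸ Submodule.mem_top : x ∈ T ⊔ S)
      have hy : β y a = β a y := sub_eq_zero.mp (ha ⟨y, hy⟩)
      rw [map_add, map_add, add_apply, hy, (hS s).mp hs]
    exact Subtype.ext (Submodule.disjoint_def.mp hST.disjoint _ haS a.2)
  obtain ⟨q, hq, hdvd⟩ := Matrix.det_pencil_eq_pow_mul _ hsymm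
    (hskew ▸ (separatingLeft_iff_det_ne_zero _).mp hskew_sep)
    (hG ▸ (separatingLeft_iff_det_ne_zero _).mp hnd)
  refine ⟨q, ?_, hdvd⟩
  rw [← Fintype.card_fin (finrank k S), ← hq]
  exact associated_det_pencil_toMatrix₂ β b c

end LinearMap

theorem pow_dvd_and_not_pow_succ_dvd_of_associated {R : Type*} [CommMonoidWithZero R]
    [IsCancelMulZero R] {x y q : R} {d : ℕ} (hx : x ≠ 0) (hy : Associated y (x ^ d * q))
    (hq : ¬ x ∣ q) : x ^ d ∣ y ∧ ¬ x ^ (d + 1) ∣ y := by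
  rw [hy.dvd_iff_dvd_right, hy.dvd_iff_dvd_right, pow_succ,
    mul_dvd_mul_iff_left (pow_ne_zero d hx)]
  exact ⟨dvd_mul_right _ _, hq⟩

theorem MvPolynomial.X_add_X_ne_zero {k : Type*} [Field k] :
    (X 0 + X 1 : MvPolynomial (Fin 2) k) ≠ 0 := fun h => by
  simpa using congrArg (eval ![1, 0]) h

/-- If the symmetric form `Q_F(a,b) = F(ab)` on `Stab_F` is non-degenerate, then the maximal
power of `(λ+μ)` dividing `χ(λ,μ,F) = det (λ A_F + μ A_Fᵀ)` equals `dim Stab_F`. -/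
theorem char_poly_exact_power {k 𝔄 : Type*} [Field k] [NonUnitalRing 𝔄] [Module k 𝔄]
    [SMulCommClass k 𝔄 𝔄] [IsScalarTower k 𝔄 𝔄] [FiniteDimensional k 𝔄]
    {n : ℕ} (b : Module.Basis (Fin n) k 𝔄) (F : Module.Dual k 𝔄)
    (S : Submodule k 𝔄) (hS : ∀ a : 𝔄, a ∈ S ↔ ∀ x : 𝔄, F (a * x) = F (x * a))
    (hnondeg : ∀ a ∈ S, (∀ c ∈ S, F (a * c) = 0) → a = 0)
    (AF : Matrix (Fin n) (Fin n) k) (hAF : ∀ i j, AF i j = F (b i * b j))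
    (χ : MvPolynomial (Fin 2) k)
    (hχ : χ = Matrix.det ((X 0 : MvPolynomial (Fin 2) k) •
          AF.map (MvPolynomial.C : k → MvPolynomial (Fin 2) k)
        + (X 1 : MvPolynomial (Fin 2) k) •
          AFᵀ.map (MvPolynomial.C : k → MvPolynomial (Fin 2) k))) :
    (X 0 + X 1 : MvPolynomial (Fin 2) k) ^ (Module.finrank k S) ∣ χ ∧
    ¬ ((X 0 + X 1 : MvPolynomial (Fin 2) k) ^ (Module.finrank k S + 1) ∣ χ) := by
  let β : 𝔄 →ₗ[k] 𝔄 →ₗ[k] k := (LinearMap.mul k 𝔄).compr₂ F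
  have hAF_eq : LinearMap.toMatrix₂ b b β = AF := by
    ext i j; simp [β, LinearMap.toMatrix₂_apply, hAF]
  have hχ_eq : χ = (LinearMap.toMatrix₂ b b β).pencil.det := by
    rw [hAF_eq, hχ]; rfl
  have hnd : (β.domRestrict₁₂ S S).SeparatingLeft := fun a ha =>
    Subtype.ext (hnondeg a a.2 fun c hc => ha ⟨c, hc⟩)
  obtain ⟨q, hassoc, hq⟩ :=
    LinearMap.exists_det_pencil_toMatrix₂_associated β S (by simpa [β] using hS) hnd b
  exact pow_dvd_and_not_pow_succ_dvd_of_associated MvPolynomial.X_add_X_ne_zero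
    (hχ_eq ▸ hassoc) hq
end
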